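/- arXiv:2406.10761 — 4 statements merged into one kernel-verified Lean document; each statement's English description precedes it below -/
import Mathlib

section
/- Let 0 < p < ∞, let w = (w_j)_{j≥1} be a nondecreasing sequence of weights with 1 ≤ w_1 ≤ w_2 ≤ …, and set W_m := (w_1^p + … + w_m^p)^{1/p}. Then for every n ≥ 1, sup_{m ≥ n} (m − n)·W_m^{−2} ≤ σ_n²(U(ℓ_p(w))), where σ_n(U(ℓ_p(w))) := sup over all x ∈ ℓ₂ with ‖x‖_{ℓ_p(w)} ≤ 1 of σ_n(x). -/
open scoped BigOperators

/-- The `ℓ₂` norm of a real sequence. -/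
noncomputable def l2norm (x : ℕ → ℝ) : ℝ := Real.sqrt (∑' j, (x j) ^ 2)

/-- The error of best `n`-term approximation of `x` in `ℓ₂`:
the infimum of `‖x - S‖_{ℓ₂}` over all sequences `S` supported on at most `n` indices. -/
noncomputable def sigman (n : ℕ) (x : ℕ → ℝ) : ℝ :=
  sInf {e : ℝ | ∃ S : ℕ → ℝ, (Function.support S).Finite ∧
    (Function.support S).ncard ≤ n ∧ e = l2norm (fun j => x j - S j)}

/-- `xs` is the decreasing rearrangement of the absolute values of the entries of `x`:
it is nonincreasing and is obtained by rearranging `(|x j|)` via a bijection of the indices. -/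
def IsDecRearrangement (x xs : ℕ → ℝ) : Prop :=
  Antitone xs ∧ ∃ e : ℕ ≃ ℕ, ∀ j, xs j = |x (e j)|

/-- The weighted `ℓ_p(w)` quasi-norm `(∑ |w_j x_j|^p)^(1/p)` (for `0 < p < ∞`). -/
noncomputable def wnorm (p : ℝ) (w x : ℕ → ℝ) : ℝ := (∑' j, |w j * x j| ^ p) ^ (1 / p)

/-- `Wm p w m = (w_1^p + ... + w_m^p)^(1/p)` (the sequence `w` is indexed from `0`,
so this is the sum of the first `m` weights). -/
noncomputable def Wm (p : ℝ) (w : ℕ → ℝ) (m : ℕ) : ℝ :=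
  (∑ j ∈ Finset.range m, (w j) ^ p) ^ (1 / p)

/-- Lower bound of Theorem 2.2: `sup_{m ≥ n} (m - n) W_m^{-2} ≤ σ_n²(U(ℓ_p(w)))`,
formulated as: for every `m ≥ n` there is an element `x` of the unit ball of `ℓ_p(w)`
with `(m - n) W_m^{-2} ≤ σ_n(x)²`. -/
theorem le_sigman_sq_unitBall (p : ℝ) (hp : 0 < p)
    (w : ℕ → ℝ) (hw1 : 1 ≤ w 0) (hw : Monotone w)
    (n : ℕ) (hn : 1 ≤ n) :
    ∀ m : ℕ, n ≤ m → ∃ x : ℕ → ℝ, Summable (fun j => (x j) ^ 2) ∧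
      Summable (fun j => |w j * x j| ^ p) ∧ wnorm p w x ≤ 1 ∧
      ((m : ℝ) - n) / (Wm p w m) ^ 2 ≤ sigman n x ^ 2 := by
  intro m hm
  have hm1 : 1 ≤ m := le_trans hn hm
  have hw1' : ∀ j, 1 ≤ w j := fun j => le_trans hw1 (hw (Nat.zero_le j))
  have hterm : ∀ j, (1:ℝ) ≤ (w j) ^ p := by
    intro j
    calc (1:ℝ) = 1 ^ p := (Real.one_rpow p).symm
    _ ≤ (w j) ^ p := Real.rpow_le_rpow zero_le_one (hw1' j) hp.le
  have hSpos : 0 < ∑ j ∈ Finset.range m, (w j) ^ p := by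
    have : (m : ℝ) ≤ ∑ j ∈ Finset.range m, (w j) ^ p := by
      calc (m : ℝ) = ∑ _j ∈ Finset.range m, (1:ℝ) := by simp
      _ ≤ _ := Finset.sum_le_sum fun j _ => hterm j
    have hm0 : (0:ℝ) < m := by exact_mod_cast hm1
    linarith
  have hWpos : 0 < Wm p w m := Real.rpow_pos_of_pos hSpos _
  set W := Wm p w m with hWdef
  set x : ℕ → ℝ := fun j => if j < m then W⁻¹ else 0 with hxdef
  have hx0 : ∀ j, ¬ j < m → x j = 0 := by intro j hj; simp [hxdef, hj]
  -- summability facts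
  have hsum2 : Summable (fun j => (x j) ^ 2) := by
    apply summable_of_ne_finset_zero (s := Finset.range m)
    intro j hj
    simp [hx0 j (by simpa using hj)]
  have hsump : Summable (fun j => |w j * x j| ^ p) := by
    apply summable_of_ne_finset_zero (s := Finset.range m)
    intro j hj
    simp [hx0 j (by simpa using hj), Real.zero_rpow hp.ne']
  refine ⟨x, hsum2, hsump, ?_, ?_⟩
  · -- wnorm ≤ 1
    have htsum : (∑' j, |w j * x j| ^ p) = ∑ j ∈ Finset.range m, |w j * x j| ^ p := by
      apply tsum_eq_sum
      intro j hj
      simp [hx0 j (by simpa using hj), Real.zero_rpow hp.ne']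
    have hval : ∀ j ∈ Finset.range m, |w j * x j| ^ p = (w j) ^ p * (W⁻¹) ^ p := by
      intro j hj
      rw [Finset.mem_range] at hj
      have : x j = W⁻¹ := by simp [hxdef, hj]
      have hwj : (0:ℝ) ≤ w j := le_trans zero_le_one (hw1' j)
      rw [this, abs_of_nonneg (mul_nonneg hwj (inv_nonneg.mpr hWpos.le)),
        Real.mul_rpow hwj (inv_nonneg.mpr hWpos.le)]
    have hWp : W ^ p = ∑ j ∈ Finset.range m, (w j) ^ p := by
      rw [hWdef, Wm, one_div, Real.rpow_inv_rpow hSpos.le hp.ne']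
    have : (∑' j, |w j * x j| ^ p) = 1 := by
      rw [htsum, Finset.sum_congr rfl hval, ← Finset.sum_mul, ← hWp,
        Real.inv_rpow hWpos.le, mul_inv_cancel₀ (by positivity)]
    rw [wnorm, this, Real.one_rpow]
  · -- the sigma bound
    set B : ℝ := ((m : ℝ) - n) / W ^ 2 with hBdef
    have hBnn : 0 ≤ B := by
      apply div_nonneg _ (by positivity)
      have : (n:ℝ) ≤ m := by exact_mod_cast hm
      linarith
    have hlb : ∀ e ∈ {e : ℝ | ∃ S : ℕ → ℝ, (Function.support S).Finite ∧
        (Function.support S).ncard ≤ n ∧ e = l2norm (fun j => x j - S j)},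
        Real.sqrt B ≤ e := by
      rintro e ⟨S, hfin, hcard, rfl⟩
      have hcardF : hfin.toFinset.card ≤ n := by
        rwa [Set.ncard_eq_toFinset_card _ hfin] at hcard
      set T : Finset ℕ := Finset.range m \ hfin.toFinset with hTdef
      have hTcard : (m : ℝ) - n ≤ T.card := by
        have h1 : m - n ≤ T.card := by
          calc m - n ≤ (Finset.range m).card - hfin.toFinset.card := by
                rw [Finset.card_range]; omega
          _ ≤ T.card := Finset.le_card_sdiff _ _
        have : (m:ℝ) - n ≤ ((m - n : ℕ) : ℝ) := by
          rw [Nat.cast_sub hm]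
        calc (m:ℝ) - n ≤ ((m - n : ℕ) : ℝ) := this
        _ ≤ T.card := by exact_mod_cast h1
      have hsumd : Summable (fun j => (x j - S j) ^ 2) := by
        apply summable_of_ne_finset_zero (s := Finset.range m ∪ hfin.toFinset)
        intro j hj
        rw [Finset.mem_union, not_or] at hj
        have hS0 : S j = 0 := by
          by_contra h
          exact hj.2 (hfin.mem_toFinset.mpr h)
        simp [hx0 j (by simpa using hj.1), hS0]
      have hTval : ∀ j ∈ T, (x j - S j) ^ 2 = W⁻¹ ^ 2 := by
        intro j hj
        rw [hTdef, Finset.mem_sdiff, Finset.mem_range] at hj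
        have hS0 : S j = 0 := by
          by_contra h
          exact hj.2 (hfin.mem_toFinset.mpr h)
        simp [hxdef, hj.1, hS0]
      have hkey : B ≤ ∑' j, (x j - S j) ^ 2 := by
        calc B = ((m : ℝ) - n) * (W⁻¹ ^ 2) := by
              rw [hBdef, div_eq_mul_inv, inv_pow]
        _ ≤ (T.card : ℝ) * (W⁻¹ ^ 2) := by
              apply mul_le_mul_of_nonneg_right hTcard (by positivity)
        _ = ∑ j ∈ T, (x j - S j) ^ 2 := by
              rw [Finset.sum_congr rfl hTval, Finset.sum_const, nsmul_eq_mul]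
        _ ≤ ∑' j, (x j - S j) ^ 2 := Summable.sum_le_tsum T (fun j _ => by positivity) hsumd
      rw [l2norm]
      exact Real.sqrt_le_sqrt hkey
    have hne : ∃ e, e ∈ {e : ℝ | ∃ S : ℕ → ℝ, (Function.support S).Finite ∧
        (Function.support S).ncard ≤ n ∧ e = l2norm (fun j => x j - S j)} :=
      ⟨l2norm (fun j => x j - 0), ⟨0, by simp, by simp, rfl⟩⟩
    have hsig : Real.sqrt B ≤ sigman n x := le_csInf hne hlb
    calc B = (Real.sqrt B) ^ 2 := (Real.sq_sqrt hBnn).symm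
    _ ≤ sigman n x ^ 2 := by
        apply pow_le_pow_left₀ (Real.sqrt_nonneg B) hsig
end

section
/- Let w = (w_j)_{j≥1} be a nondecreasing sequence of weights with 1 ≤ w_1 ≤ w_2 ≤ … such that Σ_{j≥1} w_j^{−2} < ∞. Then for every n ≥ 1, σ_n²(U(ℓ_∞(w))) = Σ_{j>n} w_j^{−2}, where U(ℓ_∞(w)) := {x ∈ ℓ₂ : sup_{j≥1} |w_j x_j| ≤ 1} and σ_n(U(ℓ_∞(w))) := sup_{x ∈ U(ℓ_∞(w))} σ_n(x). -/
open scoped BigOperators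

/-! Cutting off the first `n` entries shows `σ_n(x)² ≤ ∑_{j ≥ n} x_j²`, and on the unit ball
`x_j² ≤ w_j⁻²`. Conversely, when `x_j²` is nonincreasing (as for `x = w⁻¹`), any `S` supported on
at most `n` indices leaves the entries of `x` off its support untouched, and the `k`-th of those
indices is at most `n + k`, so they carry at least `∑_{j ≥ n} x_j²`. -/

lemma summable_sub_sq_of_support_finite {x S : ℕ → ℝ} (hx : Summable fun j => x j ^ 2)
    (hS : (Function.support S).Finite) : Summable fun j => (x j - S j) ^ 2 := by
  refine (hx.add (summable_of_ne_finset_zero (s := hS.toFinset)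
    (f := fun j => (x j - S j) ^ 2 - x j ^ 2) fun j hj => ?_)).congr fun j => by ring
  simp_all

lemma sigman_le_l2norm_sub {S : ℕ → ℝ} (hS : (Function.support S).Finite)
    {n : ℕ} (hcard : (Function.support S).ncard ≤ n) (x : ℕ → ℝ) :
    sigman n x ≤ l2norm fun j => x j - S j :=
  csInf_le ⟨0, by rintro _ ⟨S, -, -, rfl⟩; exact Real.sqrt_nonneg _⟩ ⟨S, hS, hcard, rfl⟩

lemma le_sigman {n : ℕ} {x : ℕ → ℝ} {c : ℝ}
    (h : ∀ S : ℕ → ℝ, (Function.support S).Finite → (Function.support S).ncard ≤ n →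
      c ≤ l2norm fun j => x j - S j) :
    c ≤ sigman n x :=
  le_csInf ⟨_, 0, Set.finite_empty.subset (by simp), by simp, rfl⟩
    (by rintro _ ⟨S, hS, hcard, rfl⟩; exact h S hS hcard)

lemma sigman_nonneg (n : ℕ) (x : ℕ → ℝ) : 0 ≤ sigman n x :=
  le_sigman fun _ _ _ => Real.sqrt_nonneg _

lemma sigman_le_sqrt_tsum_nat_add {x a : ℕ → ℝ} (ha : Summable a) (hxa : ∀ j, x j ^ 2 ≤ a j)
    (n : ℕ) : sigman n x ≤ Real.sqrt (∑' k, a (n + k)) := by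
  set S : ℕ → ℝ := fun j => if j < n then x j else 0
  have hS : Function.support S ⊆ Finset.range n := fun j hj => by
    by_contra h
    simp_all [S]
  have hxS : ∀ j, (x j - S j) ^ 2 = if j < n then 0 else x j ^ 2 := fun j => by
    by_cases h : j < n <;> simp [S, h]
  have hx : Summable fun j => x j ^ 2 := .of_nonneg_of_le (fun j => sq_nonneg _) hxa ha
  have hsum : Summable fun j => (x j - S j) ^ 2 :=
    summable_sub_sq_of_support_finite hx ((Finset.range n).finite_toSet.subset hS)
  have htail : ∑' j, (x j - S j) ^ 2 = ∑' k, x (n + k) ^ 2 := by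
    rw [← hsum.sum_add_tsum_nat_add n, Finset.sum_eq_zero fun j hj => by
      simp [hxS, Finset.mem_range.mp hj]]
    simp [hxS, add_comm]
  refine (sigman_le_l2norm_sub ((Finset.range n).finite_toSet.subset hS) ?_ x).trans ?_
  · simpa using Set.ncard_le_ncard hS
  · exact Real.sqrt_le_sqrt <| htail.trans_le <| Summable.tsum_le_tsum (fun k => hxa _)
      (hx.comp_injective (add_right_injective n)) (ha.comp_injective (add_right_injective n))

lemma Nat.nth_notMem_le_card_add (G : Finset ℕ) (k : ℕ) : Nat.nth (· ∉ G) k ≤ G.card + k := by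
  have hcount : k < Nat.count (· ∉ G) (G.card + k + 1) := by
    have hG : {j ∈ Finset.range (G.card + k + 1) | ¬ j ∉ G} ⊆ G := fun j hj => by simp_all
    have := Finset.card_filter_add_card_filter_not (s := Finset.range (G.card + k + 1)) (· ∉ G)
    rw [Nat.count_eq_card_filter_range]
    have := Finset.card_le_card hG
    simp_all only [Finset.card_range]
    omega
  have := Nat.nth_lt_of_lt_count hcount
  omega

lemma tsum_nat_add_sq_le_tsum_sub_sq {x S : ℕ → ℝ} (hanti : Antitone fun j => x j ^ 2)
    (hx : Summable fun j => x j ^ 2) (hS : (Function.support S).Finite) {n : ℕ}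
    (hcard : (Function.support S).ncard ≤ n) :
    ∑' k, x (n + k) ^ 2 ≤ ∑' j, (x j - S j) ^ 2 := by
  set G := hS.toFinset
  have hinf : (Set.ofPred (· ∉ G)).Infinite := G.finite_toSet.infinite_compl
  refine Summable.tsum_le_tsum_of_inj _ (Nat.nth_injective hinf) (fun _ _ => sq_nonneg _)
    (fun k => ?_) (hx.comp_injective (add_right_injective n))
    (summable_sub_sq_of_support_finite hx hS)
  have hSk : S (Nat.nth (· ∉ G) k) = 0 := by
    simpa [G] using Nat.nth_mem_of_infinite hinf k
  rw [hSk, sub_zero]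
  refine hanti ((Nat.nth_notMem_le_card_add G k).trans ?_)
  rw [← Set.ncard_eq_toFinset_card _ hS]
  omega

lemma sigman_eq_sqrt_tsum_nat_add {x : ℕ → ℝ} (hanti : Antitone fun j => x j ^ 2)
    (hx : Summable fun j => x j ^ 2) (n : ℕ) :
    sigman n x = Real.sqrt (∑' k, x (n + k) ^ 2) :=
  (sigman_le_sqrt_tsum_nat_add hx (fun _ => le_rfl) n).antisymm <| le_sigman fun _ hS hcard =>
    Real.sqrt_le_sqrt (tsum_nat_add_sq_le_tsum_sub_sq hanti hx hS hcard)

lemma sq_le_inv_sq_of_abs_mul_le_one {w x : ℝ} (hw : 0 < w) (h : |w * x| ≤ 1) :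
    x ^ 2 ≤ w⁻¹ ^ 2 := by
  rw [← sq_abs]
  refine pow_le_pow_left₀ (abs_nonneg x) ?_ 2
  rw [abs_mul, abs_of_pos hw] at h
  simpa using (le_inv_mul_iff₀ hw (b := 1)).mpr h

theorem sigman_sq_unitBall_winfty_eq_general (w : ℕ → ℝ) (hw1 : 1 ≤ w 0) (hw : Monotone w)
    (hsum : Summable fun j => ((w j)⁻¹) ^ 2) (n : ℕ) :
    sSup {e : ℝ | ∃ x : ℕ → ℝ, Summable (fun j => (x j) ^ 2) ∧
        (∀ j, |w j * x j| ≤ 1) ∧ e = sigman n x ^ 2} =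
      ∑' j : ℕ, ((w (n + j))⁻¹) ^ 2 := by
  have hwpos : ∀ j, 0 < w j := fun j => zero_lt_one.trans_le (hw1.trans (hw j.zero_le))
  have hanti : Antitone fun j => (w j)⁻¹ ^ 2 := fun i j hij =>
    pow_le_pow_left₀ (inv_nonneg.mpr (hwpos j).le) (inv_anti₀ (hwpos i) (hw hij)) 2
  have htail : 0 ≤ ∑' j : ℕ, ((w (n + j))⁻¹) ^ 2 := tsum_nonneg fun _ => sq_nonneg _
  refine IsGreatest.csSup_eq ⟨⟨fun j => (w j)⁻¹, hsum, fun j => ?_, ?_⟩, ?_⟩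
  · simp [mul_inv_cancel₀ (hwpos j).ne']
  · rw [sigman_eq_sqrt_tsum_nat_add hanti hsum, Real.sq_sqrt htail]
  · rintro _ ⟨x, -, hxw, rfl⟩
    refine (Real.le_sqrt (sigman_nonneg n x) htail).mp ?_
    exact sigman_le_sqrt_tsum_nat_add hsum
      (fun j => sq_le_inv_sq_of_abs_mul_le_one (hwpos j) (hxw j)) n

/-- If `∑ w_j^{-2} < ∞`, then `σ_n²(U(ℓ_∞(w))) = ∑_{j > n} w_j^{-2}`, where
`U(ℓ_∞(w))` is the set of `x ∈ ℓ₂` with `sup_j |w_j x_j| ≤ 1`. -/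
theorem sigman_sq_unitBall_winfty_eq (w : ℕ → ℝ) (hw1 : 1 ≤ w 0) (hw : Monotone w)
    (hsum : Summable fun j => ((w j)⁻¹) ^ 2) (n : ℕ) (hn : 1 ≤ n) :
    sSup {e : ℝ | ∃ x : ℕ → ℝ, Summable (fun j => (x j) ^ 2) ∧
        (∀ j, |w j * x j| ≤ 1) ∧ e = sigman n x ^ 2} =
      ∑' j : ℕ, ((w (n + j))⁻¹) ^ 2 :=
  sigman_sq_unitBall_winfty_eq_general w hw1 hw hsum n
end

section
/- Let 0 < p < 2 and β ≥ 0, and let w_j := (1 + log j)^β for j ≥ 1. Then there exist constants c, C > 0 such that for all n ≥ 2, c·n^{−(1/p−1/2)}·(log n)^{−β} ≤ σ_n(U(ℓ_p(w))) ≤ C·n^{−(1/p−1/2)}·(log n)^{−β}. -/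
/-! Approximate `x` by its entries with `|x_j| > t`, where `t = M^{-1/p} / w_N`. Past index `N`
the weights are at least `w_N`, so such an entry carries `ℓ_p(w)`-mass at least `1/M`; hence at
most `N + M` entries are kept. A dropped entry satisfies `x_j^2 ≤ t^2 (|x_j|/t)^p` because
`p ≤ 2`, and these bounds sum to at most `(N + M) t^2`. Taking `N ≈ M ≈ n/2` and using
`w_{n/2} ≥ (log n)^β` gives the upper bound. For the lower bound, a constant vector on the first
`2n` indices, scaled into the unit ball, leaves `n` of its entries untouched by any `n`-term
approximation. -/

open scoped BigOperators

/-- `σ_n(U(ℓ_p(w)))`: the supremum of the best `n`-term approximation errors `σ_n(x)`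
over the unit ball of `ℓ_p(w)` (consisting of those `x ∈ ℓ₂` with `‖x‖_{ℓ_p(w)} ≤ 1`). -/
noncomputable def sigmanU (p : ℝ) (w : ℕ → ℝ) (n : ℕ) : ℝ :=
  sSup {e : ℝ | ∃ x : ℕ → ℝ, Summable (fun j => (x j) ^ 2) ∧
    Summable (fun j => |w j * x j| ^ p) ∧ wnorm p w x ≤ 1 ∧ e = sigman n x}

open Set Real

def MemWeightedUnitBall (p : ℝ) (w x : ℕ → ℝ) : Prop :=
  Summable (fun j => x j ^ 2) ∧ Summable (fun j => |w j * x j| ^ p) ∧ wnorm p w x ≤ 1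

lemma MemWeightedUnitBall.tsum_le_one {p : ℝ} {w x : ℕ → ℝ} (hp : 0 < p)
    (hx : MemWeightedUnitBall p w x) : ∑' j, |w j * x j| ^ p ≤ 1 := by
  by_contra! h
  have : 1 < wnorm p w x := one_lt_rpow h (by positivity)
  exact this.not_ge hx.2.2

section BestApproximation

variable {n : ℕ} {x : ℕ → ℝ}

lemma sigman_le_l2norm_sub_s10 {S : ℕ → ℝ} (hS : S.support.Finite) (hSn : S.support.ncard ≤ n) :
    sigman n x ≤ l2norm (x - S) :=
  csInf_le ⟨0, by rintro _ ⟨S', -, -, rfl⟩; exact sqrt_nonneg _⟩ ⟨S, hS, hSn, rfl⟩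

lemma le_sigman_s10 {b : ℝ}
    (h : ∀ S : ℕ → ℝ, S.support.Finite → S.support.ncard ≤ n → b ≤ l2norm (x - S)) :
    b ≤ sigman n x :=
  le_csInf ⟨_, 0, by simp, by simp, rfl⟩ (by rintro _ ⟨S, hS, hSn, rfl⟩; exact h S hS hSn)

lemma le_sigman_indicator_const (s : Finset ℕ) (a : ℝ) :
    √(s.card - n) * |a| ≤ sigman n ((s : Set ℕ).indicator fun _ => a) := by
  refine le_sigman_s10 fun S hS hSn => ?_
  set y := (s : Set ℕ).indicator (fun _ => a) - S
  set T := s \ hS.toFinset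
  have hT : (s.card : ℝ) - n ≤ T.card := by
    have h1 : s.card ≤ T.card + hS.toFinset.card := Finset.card_le_card_sdiff_add_card
    rw [← ncard_eq_toFinset_card S.support hS] at h1
    have : s.card ≤ T.card + n := by omega
    rw [sub_le_iff_le_add]
    exact_mod_cast this
  have hy : Summable fun j => y j ^ 2 := by
    refine summable_of_hasFiniteSupport ((s.finite_toSet.union hS).subset fun j hj => ?_)
    by_contra hj'
    simp only [mem_union, Finset.mem_coe, Function.mem_support, not_or, not_not] at hj'
    simp [y, hj'.1, hj'.2] at hj
  have hyT : ∀ j ∈ T, y j ^ 2 = a ^ 2 := by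
    intro j hj
    rw [Finset.mem_sdiff, Finite.mem_toFinset, Function.mem_support, not_not] at hj
    simp [y, hj.1, hj.2]
  calc √(s.card - n) * |a| ≤ √(T.card * a ^ 2) := by
        rw [sqrt_mul' _ (sq_nonneg a), sqrt_sq_eq_abs]
        gcongr
    _ = √(∑ j ∈ T, y j ^ 2) := by rw [Finset.sum_congr rfl hyT]; simp
    _ ≤ l2norm y := sqrt_le_sqrt (hy.sum_le_tsum T fun _ _ => sq_nonneg _)

end BestApproximation

section Markov

variable {ι : Type*} {f : ι → ℝ} {c : ℝ}

lemma Summable.finite_setOf_le (hf : Summable f) (hc : 0 < c) : {i | c ≤ f i}.Finite := by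
  simpa using Filter.eventually_cofinite.mp (hf.tendsto_cofinite_zero.eventually_lt_const hc)

lemma Summable.mul_ncard_setOf_le_le_tsum (hf : Summable f) (hf0 : ∀ i, 0 ≤ f i) (hc : 0 < c) :
    c * {i | c ≤ f i}.ncard ≤ ∑' i, f i := by
  have hfin := hf.finite_setOf_le hc
  rw [ncard_eq_toFinset_card _ hfin, mul_comm, ← nsmul_eq_mul]
  exact (Finset.card_nsmul_le_sum _ _ _ fun i hi => by simpa using hi).trans
    (hf.sum_le_tsum _ fun i _ => hf0 i)

end Markov

lemma sq_le_sq_mul_rpow_div {a t p : ℝ} (ha : 0 ≤ a) (hat : a ≤ t) (hp2 : p ≤ 2) :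
    a ^ 2 ≤ t ^ 2 * (a / t) ^ p := by
  rcases ha.eq_or_lt with rfl | ha
  · rw [zero_pow two_ne_zero]; positivity
  have ht : 0 < t := ha.trans_le hat
  calc a ^ 2 = t ^ 2 * (a / t) ^ (2 : ℝ) := by rw [rpow_two]; field_simp
    _ ≤ t ^ 2 * (a / t) ^ p := mul_le_mul_of_nonneg_left
      (rpow_le_rpow_of_exponent_ge (by positivity) ((div_le_one ht).mpr hat) hp2) (sq_nonneg t)

section Thresholding

variable {p t : ℝ} {w x : ℕ → ℝ} {N M : ℕ}

lemma rpow_abs_div_le (hp : 0 ≤ p) (hw : Monotone w) (hwN : 0 < w N) (ht : 0 < t)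
    (htM : (w N * t) ^ p = (M : ℝ)⁻¹) {j : ℕ} (hj : N ≤ j) :
    (|x j| / t) ^ p ≤ M * |w j * x j| ^ p := by
  have hwj : 0 < w j := hwN.trans_le (hw hj)
  calc (|x j| / t) ^ p = (w N * |x j|) ^ p / (w N * t) ^ p := by
        rw [← div_rpow (by positivity) (by positivity), mul_div_mul_left _ _ hwN.ne']
    _ ≤ |w j * x j| ^ p / (w N * t) ^ p := by
        rw [abs_mul, abs_of_pos hwj]
        gcongr
        exact hw hj
    _ = M * |w j * x j| ^ p := by rw [htM, div_inv_eq_mul, mul_comm]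

variable (hp0 : 0 < p) (hw : Monotone w) (hwN : 0 < w N) (ht : 0 < t)
  (htM : (w N * t) ^ p = (M : ℝ)⁻¹) (hxw : Summable fun j => |w j * x j| ^ p)
  (hx1 : ∑' j, |w j * x j| ^ p ≤ 1)
include hp0 hw hwN ht htM hxw hx1

lemma finite_ncard_setOf_lt_abs_le : {j | t < |x j|}.Finite ∧ {j | t < |x j|}.ncard ≤ N + M := by
  have hf : Summable fun j => M * |w j * x j| ^ p := hxw.mul_left _
  have hsub : {j | t < |x j|} ⊆ ↑(Finset.range N) ∪ {j | 1 ≤ M * |w j * x j| ^ p} := by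
    intro j hj
    rcases lt_or_ge j N with hjN | hjN
    · exact Or.inl (Finset.mem_range.mpr hjN)
    · refine Or.inr ((one_le_rpow ?_ hp0.le).trans (rpow_abs_div_le hp0.le hw hwN ht htM hjN))
      exact (one_le_div ht).mpr (le_of_lt hj)
  have hfin := (Finset.range N).finite_toSet.union (hf.finite_setOf_le one_pos)
  refine ⟨hfin.subset hsub, (ncard_le_ncard hsub hfin).trans ((ncard_union_le _ _).trans ?_)⟩
  rw [ncard_coe_finset, Finset.card_range]
  gcongr
  have := hf.mul_ncard_setOf_le_le_tsum (fun j => by positivity) one_pos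
  rw [one_mul, tsum_mul_left] at this
  exact_mod_cast this.trans (mul_le_of_le_one_right (by positivity) hx1)

lemma tsum_sq_indicator_compl_le (hp2 : p ≤ 2) :
    ∑' j, ({j | t < |x j|}ᶜ.indicator x j) ^ 2 ≤ (N + M) * t ^ 2 := by
  set u : ℕ → ℝ := (Finset.range N : Set ℕ).indicator fun _ => t ^ 2
  set v : ℕ → ℝ := fun j => t ^ 2 * (M * |w j * x j| ^ p)
  have hu : Summable u := summable_of_hasFiniteSupport ((Finset.range N).finite_toSet.subset
    support_indicator_subset)
  have hv : Summable v := (hxw.mul_left _).mul_left _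
  have hle : ∀ j, ({j | t < |x j|}ᶜ.indicator x j) ^ 2 ≤ u j + v j := by
    intro j
    have hv0 : 0 ≤ v j := by positivity
    by_cases hjt : t < |x j|
    · rw [indicator_of_notMem (by simpa using hjt), zero_pow two_ne_zero]
      exact add_nonneg (indicator_nonneg (fun _ _ => sq_nonneg t) j) hv0
    rw [not_lt] at hjt
    rw [indicator_of_mem (by simpa using hjt), ← sq_abs]
    rcases lt_or_ge j N with hjN | hjN
    · have hu : u j = t ^ 2 := indicator_of_mem (Finset.mem_coe.2 (Finset.mem_range.2 hjN)) _
      rw [hu]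
      nlinarith [pow_le_pow_left₀ (abs_nonneg (x j)) hjt 2]
    · have hu : u j = 0 := indicator_of_notMem (by simpa using hjN) _
      rw [hu, zero_add]
      exact (sq_le_sq_mul_rpow_div (abs_nonneg _) hjt hp2).trans
        (mul_le_mul_of_nonneg_left (rpow_abs_div_le hp0.le hw hwN ht htM hjN) (sq_nonneg t))
  have hsum_u : ∑' j, u j = N * t ^ 2 := by
    rw [← sum_eq_tsum_indicator]
    simp
  have hsum_v : ∑' j, v j ≤ M * t ^ 2 := by
    rw [tsum_mul_left, tsum_mul_left, mul_comm]
    gcongr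
    exact mul_le_of_le_one_right (by positivity) hx1
  calc ∑' j, ({j | t < |x j|}ᶜ.indicator x j) ^ 2 ≤ ∑' j, (u j + v j) :=
        (hu.add hv).of_nonneg_of_le (fun _ => sq_nonneg _) hle |>.tsum_le_tsum hle (hu.add hv)
    _ ≤ (N + M) * t ^ 2 := by rw [hu.tsum_add hv, hsum_u]; linarith

end Thresholding

theorem sigman_add_le {p : ℝ} {w x : ℕ → ℝ} {N M : ℕ} (hp0 : 0 < p) (hp2 : p ≤ 2)
    (hw : Monotone w) (hwN : 0 < w N) (hM : 0 < M) (hx : MemWeightedUnitBall p w x) :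
    sigman (N + M) x ≤ √(N + M) * ((M : ℝ) ^ (-(1 / p)) / w N) := by
  set t := (M : ℝ) ^ (-(1 / p)) / w N
  have ht : 0 < t := by positivity
  have htM : (w N * t) ^ p = (M : ℝ)⁻¹ := by
    rw [mul_div_cancel₀ _ hwN.ne', ← rpow_mul M.cast_nonneg, neg_mul, one_div_mul_cancel hp0.ne',
      rpow_neg_one]
  have hx1 := hx.tsum_le_one hp0
  obtain ⟨hfin, hcard⟩ := finite_ncard_setOf_lt_abs_le hp0 hw hwN ht htM hx.2.1 hx1
  calc sigman (N + M) x ≤ l2norm (x - {j | t < |x j|}.indicator x) :=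
        sigman_le_l2norm_sub_s10 (hfin.subset support_indicator_subset) <|
          (ncard_le_ncard support_indicator_subset hfin).trans hcard
    _ ≤ √((N + M) * t ^ 2) := by
        rw [l2norm, ← indicator_compl]
        exact sqrt_le_sqrt (tsum_sq_indicator_compl_le hp0 hw hwN ht htM hx.2.1 hx1 hp2)
    _ = √(N + M) * t := by rw [sqrt_mul (by positivity), sqrt_sq ht.le]

section UnitBall

variable {p : ℝ} {w : ℕ → ℝ} {n : ℕ} {B : ℝ}

lemma sigmanU_le (hB0 : 0 ≤ B) (hB : ∀ x, MemWeightedUnitBall p w x → sigman n x ≤ B) :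
    sigmanU p w n ≤ B :=
  Real.sSup_le (by rintro _ ⟨x, h2, hw, h1, rfl⟩; exact hB x ⟨h2, hw, h1⟩) hB0

lemma sigman_le_sigmanU (hB : ∀ x, MemWeightedUnitBall p w x → sigman n x ≤ B) {x : ℕ → ℝ}
    (hx : MemWeightedUnitBall p w x) : sigman n x ≤ sigmanU p w n :=
  le_csSup ⟨B, by rintro _ ⟨y, h2, hw, h1, rfl⟩; exact hB y ⟨h2, hw, h1⟩⟩
    ⟨x, hx.1, hx.2.1, hx.2.2, rfl⟩

lemma memWeightedUnitBall_indicator_const (hp : 0 < p) (s : Finset ℕ) {a : ℝ}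
    (h : ∀ j ∈ s, |w j * a| ^ p ≤ (s.card : ℝ)⁻¹) :
    MemWeightedUnitBall p w ((s : Set ℕ).indicator fun _ => a) := by
  set x := (s : Set ℕ).indicator fun _ => a
  have hxs : ∀ j ∉ s, x j = 0 := fun j hj => indicator_of_notMem hj _
  have hfin : ∀ f : ℕ → ℝ → ℝ, (∀ j, f j 0 = 0) → Summable fun j => f j (x j) := fun f hf =>
    summable_of_hasFiniteSupport (s.finite_toSet.subset fun j hj => by
      by_contra hjs
      exact hj (by simp [hxs j hjs, hf]))
  have hsum : ∑' j, |w j * x j| ^ p ≤ 1 := by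
    rw [tsum_eq_sum (s := s) fun j hj => by simp [hxs j hj, hp.ne']]
    calc ∑ j ∈ s, |w j * x j| ^ p ≤ ∑ _j ∈ s, (s.card : ℝ)⁻¹ :=
          Finset.sum_le_sum fun j hj => by simpa [x, hj] using h j hj
      _ ≤ 1 := by simpa using mul_inv_le_one
  exact ⟨hfin (fun _ y => y ^ 2) (by simp), hfin (fun j y => |w j * y| ^ p) (by simp [hp.ne']),
    rpow_le_one (tsum_nonneg fun _ => by positivity) hsum (by positivity)⟩

end UnitBall

lemma sqrt_mul_rpow_neg_one_div (p : ℝ) {k n : ℝ} (hk : 0 < k) (hn : 0 < n) :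
    √n * (k * n) ^ (-(1 / p)) = k ^ (-(1 / p)) * n ^ (-(1 / p - 1 / 2)) := by
  rw [sqrt_eq_rpow, mul_rpow hk.le hn.le, mul_left_comm, ← rpow_add hn]
  ring_nf

/-- The paper's weight `(1 + log j)^β`, shifted so that the sequence starts at index `0`. -/
noncomputable def logWeight (β : ℝ) (j : ℕ) : ℝ := (1 + Real.log ((j : ℝ) + 1)) ^ β

section LogWeight

variable {β : ℝ}

lemma one_le_one_add_log_succ (j : ℕ) : 1 ≤ 1 + Real.log ((j : ℝ) + 1) := by
  have := log_nonneg (by linarith [j.cast_nonneg (α := ℝ)] : (1 : ℝ) ≤ j + 1)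
  linarith

lemma logWeight_pos (β : ℝ) (j : ℕ) : 0 < logWeight β j :=
  rpow_pos_of_pos (by linarith [one_le_one_add_log_succ j]) _

lemma monotone_logWeight (hβ : 0 ≤ β) : Monotone (logWeight β) := fun i j hij =>
  rpow_le_rpow (by linarith [one_le_one_add_log_succ i]) (by gcongr) hβ

lemma rpow_log_le_logWeight_half (hβ : 0 ≤ β) {n : ℕ} (hn : 2 ≤ n) :
    Real.log n ^ β ≤ logWeight β (n / 2) := by
  have hn0 : (0 : ℝ) < n := by positivity
  have hhalf : (n : ℝ) ≤ 2 * ((n / 2 : ℕ) + 1) := by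
    have : n ≤ 2 * (n / 2 + 1) := by omega
    exact_mod_cast this
  have hlog : Real.log n ≤ Real.log 2 + Real.log ((n / 2 : ℕ) + 1) := by
    rw [← log_mul two_ne_zero (by positivity)]
    exact log_le_log hn0 hhalf
  exact rpow_le_rpow (log_nonneg (by exact_mod_cast (by omega : 1 ≤ n)))
    (by linarith [log_two_lt_d9]) hβ

lemma logWeight_le_of_lt_two_mul (hβ : 0 ≤ β) {n j : ℕ} (hn : 2 ≤ n) (hj : j < 2 * n) :
    logWeight β j ≤ (4 * Real.log n) ^ β := by
  have hj' : (j : ℝ) + 1 ≤ 2 * n := by exact_mod_cast hj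
  have hlog2 : Real.log 2 ≤ Real.log n := log_le_log two_pos (by exact_mod_cast hn)
  have hlog : Real.log ((j : ℝ) + 1) ≤ Real.log 2 + Real.log n := by
    rw [← log_mul two_ne_zero (by positivity)]
    exact log_le_log (by positivity) hj'
  exact rpow_le_rpow (by linarith [one_le_one_add_log_succ j]) (by linarith [log_two_gt_d9]) hβ

variable {p : ℝ}

lemma sigman_le_of_memWeightedUnitBall_logWeight (hp0 : 0 < p) (hp2 : p ≤ 2) (hβ : 0 ≤ β)
    {n : ℕ} (hn : 2 ≤ n) {x : ℕ → ℝ} (hx : MemWeightedUnitBall p (logWeight β) x) :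
    sigman n x ≤ 2 ^ (1 / p) * (n : ℝ) ^ (-(1 / p - 1 / 2)) * Real.log n ^ (-β) := by
  have hsplit : n / 2 + (n - n / 2) = n := by omega
  have hM : (2⁻¹ * n : ℝ) ≤ (n - n / 2 : ℕ) := by
    have : n ≤ 2 * (n - n / 2) := by omega
    rw [inv_mul_le_iff₀ two_pos]
    exact_mod_cast this
  have hlogn : 0 < Real.log n := log_pos (by exact_mod_cast (by omega : 1 < n))
  have hbound := sigman_add_le hp0 hp2 (monotone_logWeight hβ) (logWeight_pos β (n / 2))
    (by omega : 0 < n - n / 2) hx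
  rw [hsplit, ← Nat.cast_add, hsplit] at hbound
  calc sigman n x ≤ √n * ((n - n / 2 : ℕ) ^ (-(1 / p)) / logWeight β (n / 2)) := hbound
    _ ≤ √n * ((2⁻¹ * n : ℝ) ^ (-(1 / p)) / Real.log n ^ β) := by
        refine mul_le_mul_of_nonneg_left (div_le_div₀ (by positivity) ?_ (by positivity)
          (rpow_log_le_logWeight_half hβ hn)) (sqrt_nonneg _)
        exact rpow_le_rpow_of_nonpos (by positivity) hM (neg_nonpos.2 (by positivity))
    _ = 2 ^ (1 / p) * (n : ℝ) ^ (-(1 / p - 1 / 2)) * Real.log n ^ (-β) := by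
        rw [← mul_div_assoc, sqrt_mul_rpow_neg_one_div p (by norm_num) (by positivity),
          inv_rpow zero_le_two, rpow_neg (by positivity), inv_inv, rpow_neg hlogn.le]
        ring

lemma exists_memWeightedUnitBall_logWeight_le_sigman (hp0 : 0 < p) (hβ : 0 ≤ β) {n : ℕ}
    (hn : 2 ≤ n) : ∃ x, MemWeightedUnitBall p (logWeight β) x ∧
      2 ^ (-(1 / p)) * 4 ^ (-β) * (n : ℝ) ^ (-(1 / p - 1 / 2)) * Real.log n ^ (-β) ≤
        sigman n x := by
  have hlogn : 0 < Real.log n := log_pos (by exact_mod_cast (by omega : 1 < n))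
  set a := (2 * n : ℝ) ^ (-(1 / p)) / (4 * Real.log n) ^ β
  have ha : 0 < a := by positivity
  refine ⟨(Finset.range (2 * n) : Set ℕ).indicator fun _ => a,
    memWeightedUnitBall_indicator_const hp0 _ fun j hj => ?_, ?_⟩
  · have hj := Finset.mem_range.mp hj
    calc |logWeight β j * a| ^ p ≤ ((4 * Real.log n) ^ β * a) ^ p := by
          have hwa := mul_pos (logWeight_pos β j) ha
          rw [abs_of_pos hwa]
          exact rpow_le_rpow hwa.le
            (mul_le_mul_of_nonneg_right (logWeight_le_of_lt_two_mul hβ hn hj) ha.le) hp0.le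
      _ = ((Finset.range (2 * n)).card : ℝ)⁻¹ := by
          rw [mul_div_cancel₀ _ (by positivity), ← rpow_mul (by positivity), neg_mul,
            one_div_mul_cancel hp0.ne', rpow_neg_one, Finset.card_range]
          push_cast; rfl
  · convert le_sigman_indicator_const (n := n) (Finset.range (2 * n)) a using 1
    rw [Finset.card_range, abs_of_pos ha, Nat.cast_mul, Nat.cast_ofNat, two_mul,
      add_sub_cancel_right, mul_div_assoc', sqrt_mul_rpow_neg_one_div p two_pos (by positivity),
      mul_rpow (by norm_num) hlogn.le, rpow_neg (x := 4) (by norm_num), rpow_neg hlogn.le]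
    ring

end LogWeight

/-- Corollary 3.1: for `0 < p < 2`, `β ≥ 0` and weights `w_j = (1 + log j)^β`,
`σ_n(U(ℓ_p(w))) ≍ n^{-(1/p - 1/2)} (log n)^{-β}`. Here the sequence `w` is indexed
from `0`, so index `j` carries the weight `(1 + log (j+1))^β`. -/
theorem sigmanU_log_weights (p β : ℝ) (hp0 : 0 < p) (hp2 : p < 2) (hβ : 0 ≤ β) :
    ∃ c C : ℝ, 0 < c ∧ 0 < C ∧ ∀ n : ℕ, 2 ≤ n →
      c * (n : ℝ) ^ (-(1 / p - 1 / 2)) * Real.log n ^ (-β) ≤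
          sigmanU p (fun j => (1 + Real.log ((j : ℝ) + 1)) ^ β) n ∧
        sigmanU p (fun j => (1 + Real.log ((j : ℝ) + 1)) ^ β) n ≤
          C * (n : ℝ) ^ (-(1 / p - 1 / 2)) * Real.log n ^ (-β) := by
  refine ⟨2 ^ (-(1 / p)) * 4 ^ (-β), 2 ^ (1 / p), by positivity, by positivity, fun n hn => ?_⟩
  change _ ≤ sigmanU p (logWeight β) n ∧ sigmanU p (logWeight β) n ≤ _
  have hupper := fun x => sigman_le_of_memWeightedUnitBall_logWeight (x := x) hp0 hp2.le hβ hn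
  obtain ⟨x, hx, hlower⟩ := exists_memWeightedUnitBall_logWeight_le_sigman hp0 hβ hn
  exact ⟨hlower.trans (sigman_le_sigmanU hupper hx), sigmanU_le (by positivity) hupper⟩
end

section
/- Let 0 < p < 2 and let U(ℓ_p) := {x ∈ ℓ₂ : Σ_{j≥1} |x_j|^p ≤ 1} be the unit ball of ℓ_p. Then there exist constants c, C > 0 such that for all n ≥ 1, c·n^{−1/p+1/2} ≤ σ_n(U(ℓ_p)) ≤ C·n^{−1/p+1/2}. -/
open scoped BigOperators

-- every element of the sigman set is nonneg
lemma sigman_set_nonneg (n : ℕ) (x : ℕ → ℝ) :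
    ∀ e ∈ {e : ℝ | ∃ S : ℕ → ℝ, (Function.support S).Finite ∧
      (Function.support S).ncard ≤ n ∧ e = l2norm (fun j => x j - S j)}, 0 ≤ e := by
  rintro e ⟨S, -, -, rfl⟩
  exact Real.sqrt_nonneg _

lemma sigman_le (n : ℕ) (x S : ℕ → ℝ) (h1 : (Function.support S).Finite)
    (h2 : (Function.support S).ncard ≤ n) :
    sigman n x ≤ l2norm (fun j => x j - S j) := by
  apply csInf_le
  · exact ⟨0, sigman_set_nonneg n x⟩
  · exact ⟨S, h1, h2, rfl⟩

-- Upper bound: Stechkin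
lemma sigman_upper (p : ℝ) (hp0 : 0 < p) (hp2 : p < 2) (n : ℕ) (hn : 1 ≤ n)
    (x : ℕ → ℝ) (hsum2 : Summable (fun j => (x j) ^ 2))
    (hsump : Summable (fun j => |x j| ^ p)) (hball : ∑' j, |x j| ^ p ≤ 1) :
    sigman n x ≤ (n : ℝ) ^ (-1 / p + 1 / 2) := by
  have hn0 : (0:ℝ) < n := by exact_mod_cast hn
  set t : ℝ := (n : ℝ) ^ (-1 / p) with ht_def
  have ht : 0 < t := Real.rpow_pos_of_pos hn0 _
  have htp : t ^ p = (n : ℝ)⁻¹ := by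
    have hmul : (-1/p) * p = -1 := by field_simp
    rw [ht_def, ← Real.rpow_mul hn0.le, hmul, Real.rpow_neg_one]
  -- the bad set is finite
  have hfin : {j | t < |x j|}.Finite := by
    have h1 : ∀ᶠ j in Filter.cofinite, |x j| ^ p < t ^ p := by
      have := hsump.tendsto_cofinite_zero
      have h2 : Set.Iio (t ^ p) ∈ nhds (0:ℝ) :=
        Iio_mem_nhds (Real.rpow_pos_of_pos ht _)
      filter_upwards [this h2] with j hj
      simpa using hj
    have := Filter.eventually_cofinite.mp h1
    refine this.subset fun j hj => ?_
    simp only [Set.mem_setOf_eq, not_lt] at *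
    exact Real.rpow_le_rpow ht.le hj.le hp0.le
  set F : Finset ℕ := hfin.toFinset with hF
  have hFmem : ∀ j, j ∈ F ↔ t < |x j| := by
    intro j; simp [hF, Set.Finite.mem_toFinset]
  -- card bound
  have hcard : F.card ≤ n := by
    have hb : (F.card : ℝ) * (n:ℝ)⁻¹ ≤ 1 := by
      calc (F.card : ℝ) * (n:ℝ)⁻¹ = ∑ j ∈ F, t ^ p := by
            rw [Finset.sum_const, nsmul_eq_mul, htp]
      _ ≤ ∑ j ∈ F, |x j| ^ p := by
            refine Finset.sum_le_sum fun j hj => ?_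
            exact Real.rpow_le_rpow ht.le ((hFmem j).mp hj).le hp0.le
      _ ≤ ∑' j, |x j| ^ p := by
            refine Summable.sum_le_tsum F (fun j _ => Real.rpow_nonneg (abs_nonneg _) p) hsump
      _ ≤ 1 := hball
    have : (F.card : ℝ) ≤ n := by
      rw [mul_inv_le_iff₀ hn0, one_mul] at hb; exact hb
    exact_mod_cast this
  set S : ℕ → ℝ := fun j => if j ∈ F then x j else 0 with hS
  have hsupp : Function.support S ⊆ (F : Set ℕ) := by
    intro j hj
    simp only [Function.mem_support, hS] at hj
    simp only [hS, ne_eq, ite_eq_right_iff, not_forall] at hj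
    exact Finset.mem_coe.mpr hj.1
  have hSfin : (Function.support S).Finite := Set.Finite.subset F.finite_toSet hsupp
  have hSn : (Function.support S).ncard ≤ n := by
    calc (Function.support S).ncard ≤ (F : Set ℕ).ncard := Set.ncard_le_ncard hsupp F.finite_toSet
    _ = F.card := by simp [Set.ncard_coe_finset]
    _ ≤ n := hcard
  refine (sigman_le n x S hSfin hSn).trans ?_
  -- bound the error
  have hterm : ∀ j, (x j - S j) ^ 2 ≤ t ^ (2 - p) * |x j| ^ p := by
    intro j
    by_cases hj : j ∈ F
    · have h0 : x j - S j = 0 := by simp [hS, if_pos hj]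
      rw [h0]
      simpa using mul_nonneg (Real.rpow_nonneg ht.le (2-p)) (Real.rpow_nonneg (abs_nonneg (x j)) p)
    · simp only [hS, if_neg hj, sub_zero]
      have hle : |x j| ≤ t := le_of_not_gt (fun h => hj ((hFmem j).mpr h))
      by_cases hx0 : x j = 0
      · simp only [hx0, ne_eq]
        rw [abs_zero, Real.zero_rpow hp0.ne']
        simp
      · have habs : 0 < |x j| := abs_pos.mpr hx0
        have : (x j) ^ 2 = |x j| ^ (2 - p) * |x j| ^ p := by
          rw [← Real.rpow_add habs, sub_add_cancel, ← sq_abs (x j)]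
          rw [← Real.rpow_natCast |x j| 2]; norm_num
        rw [this]
        refine mul_le_mul_of_nonneg_right ?_ (Real.rpow_nonneg (abs_nonneg _) p)
        exact Real.rpow_le_rpow habs.le hle (by linarith)
  have hsumRHS : Summable (fun j => t ^ (2 - p) * |x j| ^ p) := hsump.mul_left _
  have hsumLHS : Summable (fun j => (x j - S j) ^ 2) := by
    refine Summable.of_nonneg_of_le (fun j => sq_nonneg _) hterm hsumRHS
  have hsum_le : ∑' j, (x j - S j) ^ 2 ≤ t ^ (2 - p) := by
    calc ∑' j, (x j - S j) ^ 2 ≤ ∑' j, t ^ (2 - p) * |x j| ^ p :=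
          Summable.tsum_le_tsum hterm hsumLHS hsumRHS
    _ = t ^ (2 - p) * ∑' j, |x j| ^ p := tsum_mul_left
    _ ≤ t ^ (2 - p) * 1 := by
          refine mul_le_mul_of_nonneg_left hball (Real.rpow_nonneg ht.le _)
    _ = t ^ (2 - p) := mul_one _
  have : l2norm (fun j => x j - S j) ≤ Real.sqrt (t ^ (2 - p)) :=
    Real.sqrt_le_sqrt hsum_le
  refine this.trans ?_
  rw [Real.sqrt_eq_rpow, ht_def, ← Real.rpow_mul hn0.le, ← Real.rpow_mul hn0.le]
  apply le_of_eq
  congr 1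
  field_simp
  ring


-- Lower bound witness
lemma sigman_lower (p : ℝ) (hp0 : 0 < p) (n : ℕ) (hn : 1 ≤ n) :
    ∃ x : ℕ → ℝ, Summable (fun j => (x j) ^ 2) ∧ Summable (fun j => |x j| ^ p) ∧
      (∑' j, |x j| ^ p) ≤ 1 ∧
      Real.sqrt n * ((2 * n : ℕ) : ℝ) ^ (-1 / p) ≤ sigman n x := by
  have h2n0 : (0:ℝ) < ((2 * n : ℕ) : ℝ) := by
    have : 1 ≤ 2 * n := le_trans hn (by omega)
    exact_mod_cast this
  set a : ℝ := ((2 * n : ℕ) : ℝ) ^ (-1 / p) with ha_def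
  have ha : 0 < a := Real.rpow_pos_of_pos h2n0 _
  have hap : a ^ p = (((2 * n : ℕ) : ℝ))⁻¹ := by
    have hmul : (-1/p) * p = -1 := by field_simp
    rw [ha_def, ← Real.rpow_mul h2n0.le, hmul, Real.rpow_neg_one]
  set x : ℕ → ℝ := fun j => if j < 2 * n then a else 0 with hx
  refine ⟨x, ?_, ?_, ?_, ?_⟩
  · refine summable_of_ne_finset_zero (s := Finset.range (2 * n)) fun j hj => ?_
    simp only [Finset.mem_range] at hj
    simp [hx, hj]
  · refine summable_of_ne_finset_zero (s := Finset.range (2 * n)) fun j hj => ?_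
    simp only [Finset.mem_range] at hj
    simp [hx, hj, Real.zero_rpow hp0.ne']
  · have : ∑' j, |x j| ^ p = ∑ j ∈ Finset.range (2 * n), |x j| ^ p := by
      refine tsum_eq_sum fun j hj => ?_
      simp only [Finset.mem_range] at hj
      simp [hx, hj, Real.zero_rpow hp0.ne']
    rw [this]
    have : ∑ j ∈ Finset.range (2 * n), |x j| ^ p = (2 * n : ℕ) * a ^ p := by
      rw [Finset.sum_congr rfl fun j hj => ?_]
      · rw [Finset.sum_const, Finset.card_range, nsmul_eq_mul]
      · simp only [Finset.mem_range] at hj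
        simp [hx, hj, abs_of_pos ha]
    rw [this, hap, mul_inv_cancel₀ h2n0.ne']
  · -- sigman lower bound
    refine le_csInf ⟨l2norm (fun j => x j - 0), 0, by simp, by simp, rfl⟩ ?_
    rintro e ⟨S, hSfin, hSn, rfl⟩
    set G : Finset ℕ := hSfin.toFinset with hG
    have hGcard : G.card ≤ n := by
      rw [hG]
      have := Set.ncard_eq_toFinset_card _ hSfin
      omega
    set F : Finset ℕ := Finset.range (2 * n) \ G with hF
    have hFcard : n ≤ F.card := by
      have h1 : (Finset.range (2*n)).card - G.card ≤ F.card := Finset.le_card_sdiff G _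
      rw [Finset.card_range] at h1
      omega
    have hterm : ∀ j ∈ F, (x j - S j) ^ 2 = a ^ 2 := by
      intro j hj
      rw [hF, Finset.mem_sdiff, Finset.mem_range] at hj
      have hS0 : S j = 0 := by
        by_contra h
        exact hj.2 ((Set.Finite.mem_toFinset hSfin).mpr h)
      simp [hx, hj.1, hS0]
    have hsummable : Summable (fun j => (x j - S j) ^ 2) := by
      refine summable_of_ne_finset_zero (s := Finset.range (2 * n) ∪ G) fun j hj => ?_
      rw [Finset.mem_union, not_or, Finset.mem_range] at hj
      have hx0 : x j = 0 := by simp [hx, hj.1]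
      have hS0 : S j = 0 := by
        by_contra h
        exact hj.2 ((Set.Finite.mem_toFinset hSfin).mpr h)
      simp [hx0, hS0]
    have hlow : (n : ℝ) * a ^ 2 ≤ ∑' j, (x j - S j) ^ 2 := by
      calc (n : ℝ) * a ^ 2 ≤ (F.card : ℝ) * a ^ 2 := by
            refine mul_le_mul_of_nonneg_right ?_ (sq_nonneg a)
            exact_mod_cast hFcard
      _ = ∑ j ∈ F, (x j - S j) ^ 2 := by
            rw [Finset.sum_congr rfl hterm, Finset.sum_const, nsmul_eq_mul]
      _ ≤ ∑' j, (x j - S j) ^ 2 :=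
            Summable.sum_le_tsum F (fun j _ => sq_nonneg _) hsummable
    have : Real.sqrt ((n : ℝ) * a ^ 2) ≤ l2norm (fun j => x j - S j) :=
      Real.sqrt_le_sqrt hlow
    refine le_trans (le_of_eq ?_) this
    rw [Real.sqrt_mul (Nat.cast_nonneg n), Real.sqrt_sq ha.le]

/-- Stechkin's result: for `0 < p < 2`, the best `n`-term approximation error of the
unit ball of `ℓ_p` (inside `ℓ₂`) satisfies `σ_n(U(ℓ_p)) ≍ n^{-1/p + 1/2}`. -/
theorem sigmanU_lp_unitBall (p : ℝ) (hp0 : 0 < p) (hp2 : p < 2) :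
    ∃ c C : ℝ, 0 < c ∧ 0 < C ∧ ∀ n : ℕ, 1 ≤ n →
      c * (n : ℝ) ^ (-1 / p + 1 / 2) ≤ sigmanU p (fun _ => 1) n ∧
        sigmanU p (fun _ => 1) n ≤ C * (n : ℝ) ^ (-1 / p + 1 / 2) := by

  refine ⟨(2:ℝ) ^ (-1/p), 1, Real.rpow_pos_of_pos two_pos _, one_pos, fun n hn => ?_⟩
  have hn0 : (0:ℝ) < n := by exact_mod_cast hn
  set B : ℝ := (n : ℝ) ^ (-1 / p + 1 / 2) with hB
  have hBnonneg : 0 ≤ B := Real.rpow_nonneg hn0.le _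
  -- every element of the set is ≤ B
  have hub : ∀ e ∈ {e : ℝ | ∃ x : ℕ → ℝ, Summable (fun j => (x j) ^ 2) ∧
      Summable (fun j => |(fun _ => (1:ℝ)) j * x j| ^ p) ∧ wnorm p (fun _ => 1) x ≤ 1 ∧
      e = sigman n x}, e ≤ B := by
    rintro e ⟨x, h2, hpsum, hw, rfl⟩
    simp only [one_mul] at hpsum
    have hw' : (∑' j, |x j| ^ p) ^ (1/p) ≤ 1 := by
      simpa [wnorm, one_mul] using hw
    have hball : ∑' j, |x j| ^ p ≤ 1 := by
      by_contra h
      push_neg at h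
      have h1 : (1:ℝ) < (∑' j, |x j| ^ p) ^ (1/p) := by
        rw [Real.one_lt_rpow_iff_of_pos (lt_trans one_pos h)]
        exact Or.inl ⟨h, by positivity⟩
      linarith
    exact sigman_upper p hp0 hp2 n hn x h2 hpsum hball
  constructor
  · -- lower bound
    obtain ⟨x, hs2, hsp, hball, hlow⟩ := sigman_lower p hp0 n hn
    have hmem : sigman n x ∈ {e : ℝ | ∃ x : ℕ → ℝ, Summable (fun j => (x j) ^ 2) ∧
        Summable (fun j => |(fun _ => (1:ℝ)) j * x j| ^ p) ∧ wnorm p (fun _ => 1) x ≤ 1 ∧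
        e = sigman n x} := by
      refine ⟨x, hs2, by simpa [one_mul] using hsp, ?_, rfl⟩
      have : (∑' j, |x j| ^ p) ^ (1/p) ≤ 1 :=
        Real.rpow_le_one (tsum_nonneg fun j => Real.rpow_nonneg (abs_nonneg _) _) hball
          (by positivity)
      simpa [wnorm, one_mul] using this
    have hle : sigman n x ≤ sigmanU p (fun _ => 1) n := le_csSup ⟨B, hub⟩ hmem
    refine le_trans (le_trans (le_of_eq ?_) hlow) hle
    -- 2^(-1/p) * n^(-1/p+1/2) = sqrt n * (2n)^(-1/p)
    have h2n : ((2 * n : ℕ) : ℝ) ^ (-1/p) = (2:ℝ) ^ (-1/p) * (n:ℝ) ^ (-1/p) := by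
      push_cast
      exact Real.mul_rpow (by norm_num) (Nat.cast_nonneg n)
    rw [h2n, Real.sqrt_eq_rpow, hB, Real.rpow_add hn0]
    ring
  · -- upper bound
    rw [one_mul]
    exact Real.sSup_le hub hBnonneg
end
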